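/- For every U > 0 and every t_z ≥ 0 there exists a unique T > 0 satisfying 1 = ∫_{[−π,π]³} U·tanh(ε(k)/(2T))/(2ε(k)) · dk/(2π)³; denoting this solution by T_N(U,t_z), one moreover has T_N(U,t_z) → 0 as U ↓ 0 uniformly in t_z, i.e. for every δ > 0 there exists U₀ > 0 such that T_N(U,t_z) < δ for all 0 < U < U₀ and all t_z ≥ 0. -/

import Mathlib

open Real MeasureTheory Set

noncomputable section

/-- The two-dimensional density of states `N₀(ε)`, extended evenly to `(-4,4)`
and by `0` outside. -/
def N0 (ε : ℝ) : ℝ :=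
  if |ε| < 4 then
    (Real.pi ^ 2)⁻¹ * ∫ u in (-2:ℝ)..(2 - |ε|),
      (Real.sqrt (4 - u ^ 2) * Real.sqrt (4 - (u + |ε|) ^ 2))⁻¹
  else 0

/-- The three-dimensional density of states `N_{t_z}(ε)`. -/
def N3 (tz ε : ℝ) : ℝ :=
  Real.pi⁻¹ * ∫ u in (-2:ℝ)..2, N0 (tz * u + ε) / Real.sqrt (4 - u ^ 2)

/-- `tanh (x / y)` with the convention that it equals `1` when `y = 0`. -/
def thQ (x y : ℝ) : ℝ := if y = 0 then 1 else Real.tanh (x / y)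

/-- The tight-binding band relation of the anisotropic 3D model. -/
def bandE (tz k₁ k₂ k₃ : ℝ) : ℝ :=
  -2 * (Real.cos k₁ + Real.cos k₂) - 2 * tz * Real.cos k₃

/-- The integrand of the Néel-temperature equation, interpreted as `U/(4T)` where the band
relation vanishes. -/
def neelIntegrand (U tz T k₁ k₂ k₃ : ℝ) : ℝ :=
  if bandE tz k₁ k₂ k₃ = 0 then U / (4 * T)
  else U * Real.tanh (bandE tz k₁ k₂ k₃ / (2 * T)) / (2 * bandE tz k₁ k₂ k₃)

/-- The equation characterizing the Néel temperature of the anisotropic 3D model. -/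
def neelEq (U tz T : ℝ) : Prop :=
  1 = (∫ k₁ in (-Real.pi)..Real.pi, ∫ k₂ in (-Real.pi)..Real.pi,
        ∫ k₃ in (-Real.pi)..Real.pi, neelIntegrand U tz T k₁ k₂ k₃) / (2 * Real.pi) ^ 3

/-- The antiferromagnetic mean-field (gap) equation of the anisotropic 3D model. -/
def gapEq (U tz T Δ : ℝ) : Prop :=
  1 = (∫ k₁ in (-Real.pi)..Real.pi, ∫ k₂ in (-Real.pi)..Real.pi,
        ∫ k₃ in (-Real.pi)..Real.pi,
          U * thQ (Real.sqrt (Δ ^ 2 + bandE tz k₁ k₂ k₃ ^ 2)) (2 * T)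
            / (2 * Real.sqrt (Δ ^ 2 + bandE tz k₁ k₂ k₃ ^ 2))) / (2 * Real.pi) ^ 3

/-- The 2D band relation. -/
def bandE2 (k₁ k₂ : ℝ) : ℝ := -2 * (Real.cos k₁ + Real.cos k₂)

/-- The equation characterizing the 2D Néel temperature. -/
def neelEq2 (U T : ℝ) : Prop :=
  1 = (∫ k₁ in (-Real.pi)..Real.pi, ∫ k₂ in (-Real.pi)..Real.pi,
        (if bandE2 k₁ k₂ = 0 then U / (4 * T)
         else U * Real.tanh (bandE2 k₁ k₂ / (2 * T)) / (2 * bandE2 k₁ k₂))) / (2 * Real.pi) ^ 2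

/-- The 2D antiferromagnetic mean-field (gap) equation. -/
def gapEq2 (U T Δ : ℝ) : Prop :=
  1 = (∫ k₁ in (-Real.pi)..Real.pi, ∫ k₂ in (-Real.pi)..Real.pi,
        U * thQ (Real.sqrt (Δ ^ 2 + bandE2 k₁ k₂ ^ 2)) (2 * T)
          / (2 * Real.sqrt (Δ ^ 2 + bandE2 k₁ k₂ ^ 2))) / (2 * Real.pi) ^ 2

/-- The BCS-type function `J(x,y)`. -/
def Jfun (x y : ℝ) : ℝ :=
  ∫ ε in Set.Ioi (0:ℝ),
    (thQ (Real.sqrt (x ^ 2 + ε ^ 2)) (2 * y) / Real.sqrt (x ^ 2 + ε ^ 2)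
      - Real.tanh (ε / 2) / ε)

/-- `f` is the BCS gap-ratio function: for every `y ∈ [0,1)`, `f y` is the unique positive
solution `x` of `J(x,y) = 0`. -/
def IsBCS (f : ℝ → ℝ) : Prop :=
  ∀ y ∈ Set.Ico (0:ℝ) 1,
    0 < f y ∧ Jfun (f y) y = 0 ∧ ∀ x, 0 < x → Jfun x y = 0 → x = f y

/-!
With `β = 1/(2T)` the integrand is `(U/2) · β tanhc(βε)` with `tanhc x = tanh x / x`, so the
Néel equation reads `U · χ(β) = 2(2π)³` for `χ(β) = ∫ β tanhc(βε(k)) dk = ∫ tanh(βε(k))/ε(k) dk`.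
Since `β ↦ tanh(βε)/ε` is strictly increasing, `χ` is continuous and strictly increasing with
`χ(0) = 0`, and `|tanh x| ≤ |x|` gives `χ(β) ≤ (2π)³ β`, which forces `4T ≤ U` for any solution.
`χ` is unbounded: for `(k₁, k₃)` in a box of side `≍ 1/(1 + t_z)` near `(π/2, π/2)` the line
`k₂ ↦ ε(k)` crosses the Fermi surface at some `c` with `|ε| ≤ 2|k₂ - c|`, and `tanhc x ≥ 1/(1+|x|)`
then gives `∫ β tanhc(βε) dk₂ ≥ log(1 + 2β)/2`. The intermediate value theorem gives the solution.
-/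

lemma hasDerivAt_tanh (x : ℝ) : HasDerivAt tanh (1 / cosh x ^ 2) x := by
  have h := (hasDerivAt_sinh x).div (hasDerivAt_cosh x) (cosh_pos x).ne'
  rw [show tanh = fun y => sinh y / cosh y from funext tanh_eq_sinh_div_cosh]
  exact h.congr_deriv (by rw [← cosh_sq_sub_sinh_sq x]; ring)

lemma tanh_strictMono : StrictMono tanh :=
  strictMono_of_hasDerivAt_pos hasDerivAt_tanh fun x => by positivity

@[fun_prop]
lemma continuous_tanh : Continuous tanh :=
  continuous_iff_continuousAt.2 fun x => (hasDerivAt_tanh x).continuousAt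

lemma abs_tanh_le_abs (x : ℝ) : |tanh x| ≤ |x| := by
  have hlip : LipschitzWith 1 tanh := by
    refine lipschitzWith_of_nnnorm_deriv_le (fun y => (hasDerivAt_tanh y).differentiableAt)
      fun y => ?_
    rw [(hasDerivAt_tanh y).deriv, ← NNReal.coe_le_coe, coe_nnnorm, Real.norm_eq_abs,
      NNReal.coe_one, abs_of_pos (by positivity), div_le_one (by positivity)]
    nlinarith [one_le_cosh y]
  simpa [tanh_zero] using hlip.dist_le_mul x 0

lemma div_one_add_le_tanh {x : ℝ} (hx : 0 ≤ x) : x / (1 + x) ≤ tanh x := by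
  have hexp : exp (-x) * (1 + 2 * x) ≤ exp x := by
    have h := mul_le_mul_of_nonneg_left (add_one_le_exp (2 * x)) (exp_pos (-x)).le
    rwa [← exp_add, show -x + 2 * x = x by ring, add_comm] at h
  rw [tanh_eq, div_le_div_iff₀ (by linarith) (by positivity)]
  nlinarith

def tanhc (x : ℝ) : ℝ := if x = 0 then 1 else tanh x / x

lemma tanhc_neg (x : ℝ) : tanhc (-x) = tanhc x := by
  simp only [tanhc, neg_eq_zero, tanh_neg, neg_div_neg_eq]

lemma one_div_one_add_abs_le_tanhc (x : ℝ) : 1 / (1 + |x|) ≤ tanhc x := by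
  wlog hx : 0 ≤ x generalizing x
  · simpa [tanhc_neg] using this (-x) (by linarith)
  rcases hx.eq_or_lt with rfl | hx
  · simp [tanhc]
  rw [tanhc, if_neg hx.ne', abs_of_pos hx, le_div_iff₀ hx, one_div_mul_eq_div]
  exact div_one_add_le_tanh hx.le

lemma tanhc_pos (x : ℝ) : 0 < tanhc x :=
  (one_div_pos.2 (by positivity)).trans_le (one_div_one_add_abs_le_tanhc x)

lemma tanhc_le_one (x : ℝ) : tanhc x ≤ 1 := by
  unfold tanhc
  split_ifs with hx
  · rfl
  · calc tanh x / x ≤ |tanh x / x| := le_abs_self _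
      _ ≤ 1 := by rw [abs_div, div_le_one (abs_pos.2 hx)]; exact abs_tanh_le_abs x

lemma mul_tanhc_mul (β : ℝ) {e : ℝ} (he : e ≠ 0) : β * tanhc (β * e) = tanh (β * e) / e := by
  rcases eq_or_ne β 0 with rfl | hβ
  · simp
  rw [tanhc, if_neg (mul_ne_zero hβ he)]
  field_simp

@[fun_prop]
lemma continuous_tanhc : Continuous tanhc := by
  refine continuous_iff_continuousAt.2 fun x => ?_
  rcases eq_or_ne x 0 with rfl | hx
  · have hslope := hasDerivAt_iff_tendsto_slope.1 (hasDerivAt_tanh 0)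
    simp only [cosh_zero, one_pow, div_one] at hslope
    rw [ContinuousAt, show tanhc 0 = 1 from if_pos rfl, ← nhdsNE_sup_pure (0:ℝ),
      Filter.tendsto_sup]
    refine ⟨hslope.congr' ?_, by simpa [tanhc] using tendsto_pure_nhds tanhc 0⟩
    filter_upwards [self_mem_nhdsWithin] with y (hy : y ≠ 0)
    simp [slope, tanhc, hy, tanh_zero, div_eq_inv_mul]
  · refine (continuous_tanh.continuousAt.div continuousAt_id hx).congr ?_
    filter_upwards [isOpen_ne.mem_nhds hx] with y (hy : y ≠ 0)
    simp [tanhc, hy]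

lemma strictMono_mul_tanhc_mul (e : ℝ) : StrictMono fun β => β * tanhc (β * e) := by
  rcases lt_trichotomy e 0 with he | rfl | he
  · simp only [mul_tanhc_mul _ he.ne]
    intro β β' h
    exact div_lt_div_of_neg_of_lt he (tanh_strictMono (by nlinarith))
  · intro β β' h
    simpa [tanhc] using h
  · simp only [mul_tanhc_mul _ he.ne']
    intro β β' h
    exact div_lt_div_of_pos_right (tanh_strictMono (by nlinarith)) he

lemma intervalIntegral_mono_of_subinterval {f g : ℝ → ℝ} {a b c d : ℝ}
    (hf : IntervalIntegrable f volume a b) (hf0 : ∀ x ∈ Icc a b, 0 ≤ f x)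
    (hg : IntervalIntegrable g volume c d) (hac : a ≤ c) (hcd : c ≤ d) (hdb : d ≤ b)
    (hgf : ∀ x ∈ Icc c d, g x ≤ f x) :
    ∫ x in c..d, g x ≤ ∫ x in a..b, f x := by
  have hf' : IntervalIntegrable f volume c d :=
    hf.mono_set (uIcc_subset_uIcc (mem_uIcc_of_le hac (hcd.trans hdb))
      (mem_uIcc_of_le (hac.trans hcd) hdb))
  calc ∫ x in c..d, g x ≤ ∫ x in c..d, f x := intervalIntegral.integral_mono_on hcd hg hf' hgf
    _ ≤ ∫ x in a..b, f x := intervalIntegral.integral_mono_interval hac hcd hdb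
        ((ae_restrict_iff' measurableSet_Ioc).2 (.of_forall fun x hx =>
          hf0 x (Ioc_subset_Icc_self hx))) hf

section Triple

variable {a b : ℝ} {f g : ℝ → ℝ → ℝ → ℝ}

lemma intervalIntegral₃_mono (hab : a ≤ b)
    (hf : Continuous fun p : ℝ × ℝ × ℝ => f p.1 p.2.1 p.2.2)
    (hg : Continuous fun p : ℝ × ℝ × ℝ => g p.1 p.2.1 p.2.2) (h : ∀ x y z, f x y z ≤ g x y z) :
    ∫ x in a..b, ∫ y in a..b, ∫ z in a..b, f x y z ≤
      ∫ x in a..b, ∫ y in a..b, ∫ z in a..b, g x y z := by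
  have le_of_forall_le {u v : ℝ → ℝ} (hu : Continuous u) (hv : Continuous v)
      (huv : ∀ x, u x ≤ v x) :
      ∫ x in a..b, u x ≤ ∫ x in a..b, v x :=
    intervalIntegral.integral_mono_on hab (hu.intervalIntegrable a b) (hv.intervalIntegrable a b)
      fun x _ => huv x
  refine le_of_forall_le (by fun_prop) (by fun_prop) fun x => ?_
  refine le_of_forall_le (by fun_prop) (by fun_prop) fun y => ?_
  exact le_of_forall_le (by fun_prop) (by fun_prop) fun z => h x y z

lemma intervalIntegral₃_lt (hab : a < b)
    (hf : Continuous fun p : ℝ × ℝ × ℝ => f p.1 p.2.1 p.2.2)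
    (hg : Continuous fun p : ℝ × ℝ × ℝ => g p.1 p.2.1 p.2.2) (h : ∀ x y z, f x y z < g x y z) :
    ∫ x in a..b, ∫ y in a..b, ∫ z in a..b, f x y z <
      ∫ x in a..b, ∫ y in a..b, ∫ z in a..b, g x y z := by
  have lt_of_forall_lt {u v : ℝ → ℝ} (hu : Continuous u) (hv : Continuous v)
      (huv : ∀ x, u x < v x) :
      ∫ x in a..b, u x < ∫ x in a..b, v x :=
    intervalIntegral.integral_lt_integral_of_continuousOn_of_le_of_exists_lt hab hu.continuousOn
      hv.continuousOn (fun x _ => (huv x).le) ⟨a, left_mem_Icc.2 hab.le, huv a⟩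
  refine lt_of_forall_lt (by fun_prop) (by fun_prop) fun x => ?_
  refine lt_of_forall_lt (by fun_prop) (by fun_prop) fun y => ?_
  exact lt_of_forall_lt (by fun_prop) (by fun_prop) fun z => h x y z

end Triple

lemma log_le_intervalIntegral_mul_tanhc {β a b c : ℝ} (hβ : 0 ≤ β) (hac : a ≤ c)
    (hcb : c + 1 ≤ b) :
    log (1 + 2 * β) / 2 ≤ ∫ x in a..b, β * tanhc (β * (2 * cos c - 2 * cos x)) := by
  have hden : ∀ x ∈ uIcc c (c + 1), 0 < 1 + 2 * β * (x - c) := fun x hx => by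
    rw [uIcc_of_le (by linarith)] at hx
    nlinarith [hx.1]
  have hbound : ∀ x ∈ Icc c (c + 1),
      β / (1 + 2 * β * (x - c)) ≤ β * tanhc (β * (2 * cos c - 2 * cos x)) := fun x hx => by
    have hcos : |2 * cos c - 2 * cos x| ≤ 2 * (x - c) := by
      have h := abs_cos_sub_cos_le c x
      rw [abs_sub_comm c x, abs_of_nonneg (sub_nonneg.2 hx.1)] at h
      rw [← mul_sub, abs_mul, abs_two]
      linarith
    calc β / (1 + 2 * β * (x - c))
        ≤ β * (1 / (1 + |β * (2 * cos c - 2 * cos x)|)) := by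
          rw [abs_mul, abs_of_nonneg hβ, mul_one_div]
          exact div_le_div_of_nonneg_left hβ (by positivity)
            (by linarith [mul_le_mul_of_nonneg_left hcos hβ])
      _ ≤ β * tanhc (β * (2 * cos c - 2 * cos x)) :=
          mul_le_mul_of_nonneg_left (one_div_one_add_abs_le_tanhc _) hβ
  have hint : IntervalIntegrable (fun x => β / (1 + 2 * β * (x - c))) volume c (c + 1) :=
    (continuousOn_const.div (by fun_prop) fun x hx => (hden x hx).ne').intervalIntegrable
  have hprimitive : ∫ x in c..c + 1, β / (1 + 2 * β * (x - c)) = log (1 + 2 * β) / 2 := by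
    rw [intervalIntegral.integral_eq_sub_of_hasDerivAt
      (f := fun x => log (1 + 2 * β * (x - c)) / 2) (fun x hx => ?_) hint]
    · simp
    · exact (((((hasDerivAt_id' x).sub_const c).const_mul (2 * β)).const_add 1).log
        (hden x hx).ne' |>.div_const 2).congr_deriv (by field_simp)
  rw [← hprimitive]
  refine intervalIntegral_mono_of_subinterval (Continuous.intervalIntegrable (by fun_prop) _ _)
    (fun x _ => ?_) hint hac (by linarith) hcb hbound
  exact mul_nonneg hβ (tanhc_pos _).le

lemma exists_mem_Icc_two_mul_cos_eq {A : ℝ} (hA : |A| ≤ 1) :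
    ∃ c ∈ Icc (π / 3) (2 * π / 3), 2 * cos c = A := by
  have hcos : 2 * cos (2 * π / 3) = -1 := by
    rw [show 2 * π / 3 = π - π / 3 by ring, cos_pi_sub, cos_pi_div_three]
    norm_num
  have hmem : A ∈ Icc (2 * cos (2 * π / 3)) (2 * cos (π / 3)) := by
    rw [hcos, cos_pi_div_three]
    constructor <;> linarith [abs_le.1 hA]
  exact intermediate_value_Icc' (by linarith [pi_pos]) (by fun_prop) hmem

lemma abs_cos_le_sub_pi_div_two {k : ℝ} (hk : π / 2 ≤ k) : |cos k| ≤ k - π / 2 := by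
  simpa [abs_of_nonneg (sub_nonneg.2 hk)] using abs_cos_sub_cos_le k (π / 2)

lemma abs_two_mul_cos_add_le_one {tz k₁ k₃ : ℝ} (htz : 0 ≤ tz)
    (hk₁ : k₁ ∈ Icc (π / 2) (π / 2 + 1 / 4)) (hk₃ : k₃ ∈ Icc (π / 2) (π / 2 + 1 / (4 * (1 + tz)))) :
    |2 * cos k₁ + 2 * tz * cos k₃| ≤ 1 := by
  have h₁ := abs_cos_le_sub_pi_div_two hk₁.1
  have h₃ : tz * |cos k₃| ≤ 1 / 4 := by
    calc tz * |cos k₃| ≤ tz * (1 / (4 * (1 + tz))) :=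
          mul_le_mul_of_nonneg_left ((abs_cos_le_sub_pi_div_two hk₃.1).trans
            (by linarith [hk₃.2])) htz
      _ ≤ 1 / 4 := by rw [mul_one_div, div_le_div_iff₀ (by positivity) (by norm_num)]; linarith
  calc |2 * cos k₁ + 2 * tz * cos k₃| ≤ 2 * |cos k₁| + 2 * (tz * |cos k₃|) := by
        refine (abs_add_le _ _).trans_eq ?_
        rw [abs_mul, abs_mul, abs_mul, abs_two, abs_of_nonneg htz]
        ring
    _ ≤ 1 := by linarith [hk₁.2]

@[fun_prop]
lemma Continuous.bandE {X : Type*} [TopologicalSpace X] {tz k₁ k₂ k₃ : X → ℝ}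
    (htz : Continuous tz) (hk₁ : Continuous k₁) (hk₂ : Continuous k₂) (hk₃ : Continuous k₃) :
    Continuous fun x => bandE (tz x) (k₁ x) (k₂ x) (k₃ x) := by
  unfold _root_.bandE
  fun_prop

/-- `susceptibility tz β` is `∫ tanh(β ε(k)) / ε(k) dk` over the Brillouin zone, so that the
Néel equation at temperature `T` reads `U · susceptibility tz (2T)⁻¹ = 2 (2π)³`. -/
def susceptibility (tz β : ℝ) : ℝ :=
  ∫ k₁ in (-π)..π, ∫ k₂ in (-π)..π, ∫ k₃ in (-π)..π, β * tanhc (β * bandE tz k₁ k₂ k₃)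

lemma continuous_susceptibility (tz : ℝ) : Continuous (susceptibility tz) := by
  unfold susceptibility
  fun_prop

lemma susceptibility_zero (tz : ℝ) : susceptibility tz 0 = 0 := by
  simp [susceptibility]

lemma strictMono_susceptibility (tz : ℝ) : StrictMono (susceptibility tz) := fun β β' h =>
  intervalIntegral₃_lt (by linarith [pi_pos]) (by fun_prop) (by fun_prop) fun _ _ _ =>
    strictMono_mul_tanhc_mul _ h

lemma susceptibility_le (tz : ℝ) {β : ℝ} (hβ : 0 ≤ β) :
    susceptibility tz β ≤ (2 * π) ^ 3 * β := by
  calc susceptibility tz β ≤ ∫ _ in (-π)..π, ∫ _ in (-π)..π, ∫ _ in (-π)..π, β :=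
        intervalIntegral₃_mono (by linarith [pi_pos]) (by fun_prop) (by fun_prop) fun _ _ _ =>
          mul_le_of_le_one_right hβ (tanhc_le_one _)
    _ = (2 * π) ^ 3 * β := by simp; ring

lemma log_le_intervalIntegral_bandE {tz β k₁ k₃ : ℝ} (htz : 0 ≤ tz) (hβ : 0 ≤ β)
    (hk₁ : k₁ ∈ Icc (π / 2) (π / 2 + 1 / 4)) (hk₃ : k₃ ∈ Icc (π / 2) (π / 2 + 1 / (4 * (1 + tz)))) :
    log (1 + 2 * β) / 2 ≤ ∫ k₂ in (-π)..π, β * tanhc (β * bandE tz k₁ k₂ k₃) := by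
  obtain ⟨c, hc, hcA⟩ := exists_mem_Icc_two_mul_cos_eq (A := -(2 * cos k₁ + 2 * tz * cos k₃))
    (by rw [abs_neg]; exact abs_two_mul_cos_add_le_one htz hk₁ hk₃)
  have hband : ∀ k₂, bandE tz k₁ k₂ k₃ = 2 * cos c - 2 * cos k₂ := fun k₂ => by
    unfold bandE
    linarith
  simp only [hband]
  exact log_le_intervalIntegral_mul_tanhc hβ (by linarith [hc.1, pi_pos])
    (by linarith [hc.2, pi_gt_three])

lemma log_le_susceptibility {tz β : ℝ} (htz : 0 ≤ tz) (hβ : 0 ≤ β) :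
    log (1 + 2 * β) / (32 * (1 + tz)) ≤ susceptibility tz β := by
  set r := 1 / (4 * (1 + tz))
  have hpi := pi_gt_three
  have hr : 0 < r := by positivity
  have hr1 : r ≤ 1 / 4 := one_div_le_one_div_of_le (by norm_num) (by linarith)
  have hF0 : ∀ k₁ k₂ k₃, 0 ≤ β * tanhc (β * bandE tz k₁ k₂ k₃) := fun _ _ _ =>
    mul_nonneg hβ (tanhc_pos _).le
  have hmiddle : ∀ k₁ ∈ Icc (π / 2) (π / 2 + 1 / 4), r * (log (1 + 2 * β) / 2) ≤
      ∫ k₂ in (-π)..π, ∫ k₃ in (-π)..π, β * tanhc (β * bandE tz k₁ k₂ k₃) := by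
    intro k₁ hk₁
    rw [intervalIntegral_intervalIntegral_swap ((Continuous.continuousOn (by fun_prop))
      |>.integrableOn_compact (isCompact_uIcc.prod isCompact_uIcc)
      |>.mono_set (prod_mono uIoc_subset_uIcc uIoc_subset_uIcc))]
    have h := intervalIntegral_mono_of_subinterval (a := -π) (b := π) (c := π / 2)
      (d := π / 2 + r) (Continuous.intervalIntegrable (by fun_prop) _ _)
      (fun k₃ _ => intervalIntegral.integral_nonneg (by linarith) fun k₂ _ => hF0 k₁ k₂ k₃)
      intervalIntegrable_const (by linarith) (by linarith) (by linarith)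
      fun k₃ hk₃ => log_le_intervalIntegral_bandE htz hβ hk₁ hk₃
    rwa [intervalIntegral.integral_const, smul_eq_mul, add_sub_cancel_left] at h
  have houter := intervalIntegral_mono_of_subinterval (a := -π) (b := π) (c := π / 2)
    (d := π / 2 + 1 / 4) (Continuous.intervalIntegrable (by fun_prop) _ _)
    (fun k₁ _ => intervalIntegral.integral_nonneg (by linarith) fun k₂ _ =>
      intervalIntegral.integral_nonneg (by linarith) fun k₃ _ => hF0 k₁ k₂ k₃)
    intervalIntegrable_const (by linarith) (by linarith) (by linarith) hmiddle
  rw [intervalIntegral.integral_const, smul_eq_mul, add_sub_cancel_left] at houter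
  calc log (1 + 2 * β) / (32 * (1 + tz)) = 1 / 4 * (r * (log (1 + 2 * β) / 2)) := by
        simp only [r]
        field_simp
        ring
    _ ≤ susceptibility tz β := houter

lemma existsUnique_susceptibility_eq {tz L : ℝ} (htz : 0 ≤ tz) (hL : 0 < L) :
    ∃! β, 0 < β ∧ susceptibility tz β = L := by
  set M := 32 * (1 + tz) * L
  have hlarge : L ≤ susceptibility tz (exp M / 2) := by
    refine le_trans ?_ (log_le_susceptibility htz (by positivity))
    rw [le_div_iff₀ (by positivity), mul_div_cancel₀ _ two_ne_zero]
    calc L * (32 * (1 + tz)) = log (exp M) := by rw [log_exp]; ring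
      _ ≤ log (1 + exp M) := log_le_log (exp_pos M) (by linarith)
  obtain ⟨β, hβ, hβL⟩ := intermediate_value_Icc (by positivity)
    (continuous_susceptibility tz).continuousOn
    ⟨(susceptibility_zero tz).trans_le hL.le, hlarge⟩
  have hβ0 : β ≠ 0 := by
    rintro rfl
    rw [susceptibility_zero] at hβL
    exact hL.ne hβL
  exact ⟨β, ⟨lt_of_le_of_ne hβ.1 hβ0.symm, hβL⟩,
    fun β' hβ' => (strictMono_susceptibility tz).injective (hβ'.2.trans hβL.symm)⟩

lemma neelIntegrand_eq {U tz T : ℝ} (hT : 0 < T) (k₁ k₂ k₃ : ℝ) :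
    neelIntegrand U tz T k₁ k₂ k₃ =
      U / 2 * ((2 * T)⁻¹ * tanhc ((2 * T)⁻¹ * bandE tz k₁ k₂ k₃)) := by
  unfold neelIntegrand
  split_ifs with he
  · rw [he, mul_zero, tanhc, if_pos rfl]
    field_simp
    ring
  · rw [mul_tanhc_mul _ he, inv_mul_eq_div]
    field_simp

lemma neelEq_iff {U tz T : ℝ} (hT : 0 < T) :
    neelEq U tz T ↔ U * susceptibility tz (2 * T)⁻¹ = 2 * (2 * π) ^ 3 := by
  unfold neelEq susceptibility
  simp only [neelIntegrand_eq hT, intervalIntegral.integral_const_mul]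
  rw [eq_div_iff (by positivity)]
  constructor <;> intro h <;> linarith

lemma four_mul_le_of_neelEq {U tz T : ℝ} (hU : 0 ≤ U) (hT : 0 < T) (h : neelEq U tz T) :
    4 * T ≤ U := by
  have hle := mul_le_mul_of_nonneg_left
    (susceptibility_le tz (inv_nonneg.2 (by positivity : 0 ≤ 2 * T))) hU
  rw [(neelEq_iff hT).1 h, mul_left_comm] at hle
  have h2 : 2 ≤ U * (2 * T)⁻¹ :=
    le_of_mul_le_mul_left (by linarith) (by positivity : 0 < (2 * π) ^ 3)
  rw [← div_eq_mul_inv, le_div_iff₀ (by positivity)] at h2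
  linarith

/-- Lemma 3.2: for every `U > 0` and `t_z ≥ 0` there is a unique Néel temperature `T > 0`
solving the Néel equation, and it tends to `0` as `U ↓ 0` uniformly in `t_z ≥ 0`. -/
theorem neel_temperature_exists_unique_and_tendsto_zero :
    (∀ U : ℝ, 0 < U → ∀ tz : ℝ, 0 ≤ tz → ∃! T : ℝ, 0 < T ∧ neelEq U tz T) ∧
    (∀ δ : ℝ, 0 < δ → ∃ U₀ > (0:ℝ), ∀ U : ℝ, 0 < U → U < U₀ → ∀ tz : ℝ, 0 ≤ tz →
      ∀ T : ℝ, 0 < T → neelEq U tz T → T < δ) := by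
  refine ⟨fun U hU tz htz => ?_, fun δ hδ => ⟨4 * δ, by positivity,
    fun U hU hUδ tz htz T hT hneel => ?_⟩⟩
  · obtain ⟨β, ⟨hβ, hχ⟩, huniq⟩ :=
      existsUnique_susceptibility_eq htz (show 0 < 2 * (2 * π) ^ 3 / U by positivity)
    have hsolves : ∀ T, 0 < T → (neelEq U tz T ↔ (2 * T)⁻¹ = β) := fun T hT => by
      rw [neelEq_iff hT, mul_comm, ← eq_div_iff hU.ne']
      exact ⟨fun h => huniq _ ⟨by positivity, h⟩, fun h => h ▸ hχ⟩
    refine ⟨(2 * β)⁻¹, ⟨by positivity, (hsolves _ (by positivity)).2 ?_⟩,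
      fun T ⟨hT, h⟩ => ?_⟩
    · field_simp
    · rw [← (hsolves T hT).1 h]; field_simp
  · linarith [four_mul_le_of_neelEq hU.le hT hneel]
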